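/- arXiv:1508.00253 — 5 statements merged into one kernel-verified Lean document; each statement's English description precedes it below -/
import Mathlib

section
/- Let μ be a Leibniz algebra law on ℂ^3 with basis {e₁, e₂, e₃} such that μ(e₁,e₁) = e₂ and μ(e₂,e₁) = e₃ and all other products among basis vectors to be determined by the Leibniz identity together with nilpotency of each right multiplication operator. Then μ(x, e₂) = 0 for all x, and μ(e₁,e₃) = μ(e₂,e₃) = μ(e₃,e₃) = 0; hence μ is uniquely determined: the only nonzero products are μ(e₁,e₁) = e₂ and μ(e₂,e₁) = e₃. -/
private lemma decomp3 (x : Fin 3 → ℂ) :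
    x = x 0 • (Pi.single 0 1 : Fin 3 → ℂ) + x 1 • (Pi.single 1 1 : Fin 3 → ℂ)
      + x 2 • (Pi.single 2 1 : Fin 3 → ℂ) := by
  funext i; fin_cases i <;> simp [Pi.single_apply]

private lemma trace3 (f : Module.End ℂ (Fin 3 → ℂ)) :
    LinearMap.trace ℂ _ f
      = f (Pi.single 0 1) 0 + f (Pi.single 1 1) 1 + f (Pi.single 2 1) 2 := by
  rw [LinearMap.trace_eq_matrix_trace ℂ (Pi.basisFun ℂ (Fin 3))]
  simp [Matrix.trace, LinearMap.toMatrix_apply, Fin.sum_univ_three, Matrix.diag]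

/-- Let `μ` be a nilpotent Leibniz law on `ℂ³` (every right multiplication operator is
nilpotent) with `μ(e₁,e₁) = e₂` and `μ(e₂,e₁) = e₃`.  Then `μ(x,e₂) = 0` for all `x`,
`μ(e₁,e₃) = μ(e₂,e₃) = μ(e₃,e₃) = 0`, and `μ` is uniquely determined: the only nonzero
basis products are `μ(e₁,e₁) = e₂` and `μ(e₂,e₁) = e₃`. -/
theorem stmt_6
    (μ : (Fin 3 → ℂ) →ₗ[ℂ] (Fin 3 → ℂ) →ₗ[ℂ] (Fin 3 → ℂ))
    (hLeib : ∀ x y z, μ x (μ y z) = μ (μ x y) z - μ (μ x z) y)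
    (hNilp : ∀ x, IsNilpotent (μ.flip x : Module.End ℂ (Fin 3 → ℂ)))
    (h11 : μ (Pi.single 0 1) (Pi.single 0 1) = Pi.single 1 1)
    (h21 : μ (Pi.single 1 1) (Pi.single 0 1) = Pi.single 2 1) :
    (∀ x, μ x (Pi.single 1 1) = 0) ∧
    μ (Pi.single 0 1) (Pi.single 2 1) = 0 ∧
    μ (Pi.single 1 1) (Pi.single 2 1) = 0 ∧
    μ (Pi.single 2 1) (Pi.single 2 1) = 0 ∧
    (∀ x y, μ x y = (x 0 * y 0) • (Pi.single 1 1 : Fin 3 → ℂ) + (x 1 * y 0) • (Pi.single 2 1 : Fin 3 → ℂ)) := by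
  have h2 : ∀ x, μ x (Pi.single 1 1) = 0 := by
    intro x
    have h := hLeib x (Pi.single 0 1) (Pi.single 0 1)
    rw [h11] at h
    simpa using h
  have h3 : ∀ x, μ x (Pi.single 2 1) = 0 := by
    intro x
    have h := hLeib x (Pi.single 1 1) (Pi.single 0 1)
    rw [h21, h2 x, h2 (μ x (Pi.single 0 1))] at h
    simpa using h
  -- the right multiplication by e₁
  set N : Module.End ℂ (Fin 3 → ℂ) := μ.flip (Pi.single 0 1) with hN
  have hNapp : ∀ x, N x = μ x (Pi.single 0 1) := fun x => rfl
  set v : Fin 3 → ℂ := μ (Pi.single 2 1) (Pi.single 0 1) with hvdef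
  have hN0 : N (Pi.single 0 1) = Pi.single 1 1 := h11
  have hN1 : N (Pi.single 1 1) = Pi.single 2 1 := h21
  have hN2 : N (Pi.single 2 1) = v := rfl
  have hNv : N v = v 0 • (Pi.single 1 1 : Fin 3 → ℂ) + v 1 • (Pi.single 2 1 : Fin 3 → ℂ) + v 2 • v := by
    conv_lhs => rw [decomp3 v]
    simp [map_add, map_smul, hN0, hN1, hN2]
  have htr : ∀ n : ℕ, 0 < n → LinearMap.trace ℂ (Fin 3 → ℂ) (N ^ n) = 0 := by
    intro n hn
    exact (LinearMap.isNilpotent_trace_of_isNilpotent ((hNilp _).pow_of_pos hn.ne')).eq_zero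
  have p2 : ∀ x, (N ^ 2) x = N (N x) := by intro x; rw [pow_two]; rfl
  have p3 : ∀ x, (N ^ 3) x = N (N (N x)) := by
    intro x; rw [pow_succ, Module.End.mul_apply, p2]
  have E1 : v 2 = 0 := by
    have h := htr 1 one_pos
    rw [trace3] at h
    simpa [hN0, hN1, hN2] using h
  have E2 : v 1 = 0 := by
    have h := htr 2 two_pos
    rw [trace3] at h
    simpa [p2, hN0, hN1, hN2, hNv, E1] using h
  have E3 : v 0 = 0 := by
    have h := htr 3 (by norm_num)
    rw [trace3] at h
    simp [p3, hN0, hN1, hN2, hNv, E1, E2] at h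
    linear_combination h / 3
  have hv : μ (Pi.single 2 1) (Pi.single 0 1) = 0 := by
    rw [← hvdef, decomp3 v, E1, E2, E3]; simp
  refine ⟨h2, h3 _, h3 _, h3 _, ?_⟩
  intro x y
  conv_lhs => rw [decomp3 x, decomp3 y]
  simp [map_add, map_smul, LinearMap.add_apply, LinearMap.smul_apply, h11, h21, hv, h2, h3,
    smul_smul]
  rw [mul_comm (y 0) (x 0), mul_comm (y 0) (x 1)]
end

section
/- For each b ∈ ℂ, the bilinear map μ_{2,b} on ℂ^3 defined on the basis {e₁, e₂, e₃} by μ_{2,b}(e₁,e₁) = e₂, μ_{2,b}(e₁,e₃) = e₂, μ_{2,b}(e₃,e₃) = b·e₂, and all other basis products zero, is a nilpotent Leibniz algebra law. -/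
/-- The law `μ_{2,b}` on `ℂ³`: `μ(e₁,e₁) = e₂`, `μ(e₁,e₃) = e₂`, `μ(e₃,e₃) = b·e₂`,
other basis products zero. -/
def mu2 (b : ℂ) (x y : Fin 3 → ℂ) : Fin 3 → ℂ :=
  (x 0 * y 0 + x 0 * y 2 + b * (x 2 * y 2)) • (Pi.single 1 1 : Fin 3 → ℂ)

/-- The descending central sequence: `C 0 = C¹ = ℂ³`, `C k = C^{k+1} = μ(C^{k}, ℂ³)`. -/
def Cseq (μ : (Fin 3 → ℂ) → (Fin 3 → ℂ) → (Fin 3 → ℂ)) : ℕ → Set (Fin 3 → ℂ)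
  | 0 => Set.univ
  | k + 1 => {z | ∃ a ∈ Cseq μ k, ∃ b, z = μ a b}

lemma mu2_zero (b : ℂ) (x : Fin 3 → ℂ) : mu2 b x 0 = 0 := by
  simp [mu2]

lemma mu2_apply0 (b : ℂ) (x y : Fin 3 → ℂ) : mu2 b x y 0 = 0 := by
  simp [mu2, Pi.single_apply]

lemma mu2_apply2 (b : ℂ) (x y : Fin 3 → ℂ) : mu2 b x y 2 = 0 := by
  simp [mu2, Pi.single_apply]

/-- For each `b ∈ ℂ`, `μ_{2,b}` is a nilpotent Leibniz algebra law. -/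
theorem stmt_8 (b : ℂ) :
    (∀ x y z, mu2 b x (mu2 b y z) = mu2 b (mu2 b x y) z - mu2 b (mu2 b x z) y) ∧
    ∃ k, Cseq (mu2 b) k = {0} := by
  constructor
  · intro x y z
    have h1 : mu2 b x (mu2 b y z) = 0 := by
      simp [mu2, mu2_apply0, mu2_apply2]
    have h2 : mu2 b (mu2 b x y) z = 0 := by
      simp [mu2, mu2_apply0, mu2_apply2]
    have h3 : mu2 b (mu2 b x z) y = 0 := by
      simp [mu2, mu2_apply0, mu2_apply2]
    rw [h1, h2, h3, sub_zero]
  · refine ⟨2, ?_⟩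
    ext z
    simp only [Cseq, Set.mem_setOf_eq, Set.mem_singleton_iff]
    constructor
    · rintro ⟨a, ⟨a', _, c, rfl⟩, w, rfl⟩
      simp [mu2, mu2_apply0, mu2_apply2]
    · rintro rfl
      exact ⟨0, ⟨0, trivial, 0, (mu2_zero b 0).symm⟩, 0, (mu2_zero b 0).symm⟩
end

section
/- For b ≠ b' in ℂ, the Leibniz algebras μ_{2,b} and μ_{2,b'} on ℂ^3 are not isomorphic. -/
/-- For `b ≠ b'`, the Leibniz algebras `μ_{2,b}` and `μ_{2,b'}` are not isomorphic. -/
theorem stmt_9 (b b' : ℂ) (hbb : b ≠ b') :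
    ¬ ∃ f : (Fin 3 → ℂ) ≃ₗ[ℂ] (Fin 3 → ℂ),
        ∀ x y, f (mu2 b x y) = mu2 b' (f x) (f y) := by
  rintro ⟨f, hf⟩
  set P : Fin 3 → ℂ := Pi.single 1 1 with hP
  set e0 : Fin 3 → ℂ := Pi.single 0 1 with he0
  set e2 : Fin 3 → ℂ := Pi.single 2 1 with he2
  have h00 : mu2 b e0 e0 = P := by
    simp [mu2, he0, hP, Pi.single_apply]
  have h02 : mu2 b e0 e2 = P := by
    simp [mu2, he0, he2, hP, Pi.single_apply]
  have h20 : mu2 b e2 e0 = 0 := by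
    simp [mu2, he0, he2, Pi.single_apply]
  have h22 : mu2 b e2 e2 = b • P := by
    simp [mu2, he2, hP, Pi.single_apply]
  set u : Fin 3 → ℂ := f e0 with hu
  set v : Fin 3 → ℂ := f e2 with hv
  set c : ℂ := u 0 * u 0 + u 0 * u 2 + b' * (u 2 * u 2) with hc
  have hfP : f P = c • P := by
    have h := hf e0 e0
    rw [h00] at h
    exact h
  have hcne : c ≠ 0 := by
    intro h0
    rw [h0, zero_smul] at hfP
    have hP0 : P = 0 := by
      exact f.map_eq_zero_iff.mp hfP
    have := congrFun hP0 1
    simp [hP, Pi.single_apply] at this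
  have E2 : c = u 0 * v 0 + u 0 * v 2 + b' * (u 2 * v 2) := by
    have h := hf e0 e2
    rw [h02, hfP] at h
    have h1 := congrFun h 1
    simpa [mu2, hP, Pi.single_apply] using h1
  have E3 : v 0 * u 0 + v 0 * u 2 + b' * (v 2 * u 2) = 0 := by
    have h := hf e2 e0
    rw [h20, map_zero] at h
    have h1 := congrFun h.symm 1
    simpa [mu2, hP, Pi.single_apply] using h1
  have E4 : b * c = v 0 * v 0 + v 0 * v 2 + b' * (v 2 * v 2) := by
    have h := hf e2 e2
    rw [h22, map_smul, hfP, smul_smul] at h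
    have h1 := congrFun h 1
    simpa [mu2, hP, Pi.single_apply] using h1
  have E1 : c = u 0 * u 0 + u 0 * u 2 + b' * (u 2 * u 2) := hc
  have hd : u 0 * v 2 - v 0 * u 2 = c := by linear_combination -E2 - E3
  have key : c ^ 2 * b = c ^ 2 * b' := by
    linear_combination c * E4 + (v 0 * v 0 + v 0 * v 2 + b' * (v 2 * v 2)) * E1 +
      (u 0 * v 0 + u 0 * v 2 + b' * (u 2 * v 2)) * E3 +
      ((c + (u 0 * v 2 - v 0 * u 2)) * b') * hd
  exact hbb (mul_left_cancel₀ (pow_ne_zero 2 hcne) key)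
end

section
/- Let μ₀ be a Leibniz algebra law on ℂ^n with a basis {e₁, ..., e_n} satisfying μ₀(e_i, e₁) = e_{i+1} for i = 1, ..., n-1. Then the right multiplication operator R_{e_k} is zero for all k ≥ 2, i.e., μ₀(x, e_k) = 0 for all x ∈ ℂ^n and k ≥ 2. -/
/-- If `μ₀` is a Leibniz law on `ℂⁿ` with a basis `e₁,…,e_n` (here the standard basis
indexed from `0`) satisfying `μ₀(e_i, e₁) = e_{i+1}` for `i = 1, …, n-1`, then right
multiplication by `e_k` is zero for all `k ≥ 2`: `μ₀(x, e_k) = 0` for all `x`. -/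
theorem stmt_14 {n : ℕ} [NeZero n]
    (μ : (Fin n → ℂ) →ₗ[ℂ] (Fin n → ℂ) →ₗ[ℂ] (Fin n → ℂ))
    (hLeib : ∀ x y z, μ x (μ y z) = μ (μ x y) z - μ (μ x z) y)
    (hfil : ∀ i : Fin n, ∀ h : i.val + 1 < n,
      μ (Pi.single i 1) (Pi.single 0 1) = Pi.single ⟨i.val + 1, h⟩ 1) :
    ∀ x : Fin n → ℂ, ∀ k : Fin n, 1 ≤ k.val → μ x (Pi.single k 1) = 0 := by
  have key : ∀ m : ℕ, 1 ≤ m → ∀ hmn : m < n, ∀ x, μ x (Pi.single (⟨m, hmn⟩ : Fin n) 1) = 0 := by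
    intro m
    induction m with
    | zero => intro h; omega
    | succ p ih =>
      intro _ hmn x
      have hp : p < n := Nat.lt_of_succ_lt hmn
      have he : μ (Pi.single (⟨p, hp⟩ : Fin n) 1) (Pi.single 0 1)
          = Pi.single (⟨p + 1, hmn⟩ : Fin n) 1 := hfil ⟨p, hp⟩ hmn
      rw [← he, hLeib]
      rcases Nat.eq_zero_or_pos p with hp0 | hp1
      · subst hp0
        have h0 : (⟨0, hp⟩ : Fin n) = 0 := rfl
        rw [h0, sub_self]
      · rw [ih hp1 hp x, ih hp1 hp (μ x (Pi.single 0 1))]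
        simp
  intro x k hk
  have := key k.val hk k.isLt x
  simpa using this
end

section
/- A non-abelian Lie algebra of dimension n has center of dimension at most n - 2; consequently, a non-abelian Lie algebra (viewed as a Leibniz algebra) cannot be a contraction of the null-filiform Leibniz algebra μ₀ on ℂ^n, whose right center has dimension n - 1, since contraction cannot decrease the dimension of the right center. -/
open Filter

/-- The null-filiform law `μ₀` on `ℂⁿ`: `μ₀(e_i, e₁) = e_{i+1}` for `i = 1, …, n-1`
(standard basis indexed from `0`), all other basis products zero. -/
def mu0 {n : ℕ} [NeZero n] (x y : Fin n → ℂ) : Fin n → ℂ :=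
  fun j => if j = 0 then 0 else x (j - 1) * y 0

/-- If an antisymmetric bilinear law satisfies the componentwise rank-one identity,
it is abelian. -/
lemma abelian_of_rankone {n : ℕ}
    (μ' : (Fin n → ℂ) →ₗ[ℂ] (Fin n → ℂ) →ₗ[ℂ] (Fin n → ℂ))
    (hAnti : ∀ x y, μ' x y = - μ' y x)
    (hkey : ∀ x x' y y' (i j : Fin n),
      μ' x y i * μ' x' y' j = μ' x y' i * μ' x' y j) :
    ∀ x y, μ' x y = 0 := by
  by_contra h
  push_neg at h
  obtain ⟨x0, y0, hne⟩ := h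
  obtain ⟨i0, hi0⟩ := Function.ne_iff.mp hne
  simp only [Pi.zero_apply] at hi0
  -- μ' y0 y0 = 0 by antisymmetry
  have hself : ∀ z : Fin n → ℂ, μ' z z = 0 := by
    intro z
    have h := hAnti z z
    funext i
    have h2 := congrFun h i
    simp only [Pi.neg_apply, Pi.zero_apply] at h2 ⊢
    linear_combination h2 / 2
  -- step 1 : μ' y0 x = 0 for all x
  have h1 : ∀ (x : Fin n → ℂ) (j : Fin n), μ' y0 x j = 0 := by
    intro x j
    have := hkey y0 x0 y0 x j i0
    rw [hself y0] at this
    simp only [Pi.zero_apply, zero_mul] at this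
    exact (mul_eq_zero.mp this.symm).resolve_right hi0
  -- step 2 : μ' x y = 0 for all x y
  have h2 : ∀ (x y : Fin n → ℂ) (j : Fin n), μ' x y j = 0 := by
    intro x y j
    have hk := hkey x x0 y y0 j i0
    have hx : μ' x y0 j = 0 := by
      rw [hAnti x y0]; simp [h1 x j]
    rw [hx, zero_mul] at hk
    exact (mul_eq_zero.mp hk).resolve_right hi0
  exact hi0 (h2 x0 y0 i0)

/-- A non-abelian Lie algebra law `μ'` on `ℂⁿ` has center of dimension at most `n - 2`;
consequently `μ'` cannot be obtained as a contraction of the null-filiform Leibniz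
algebra `μ₀` (whose right center has dimension `n - 1`). -/
theorem stmt_17 {n : ℕ} [NeZero n]
    (μ' : (Fin n → ℂ) →ₗ[ℂ] (Fin n → ℂ) →ₗ[ℂ] (Fin n → ℂ))
    (hAnti : ∀ x y, μ' x y = - μ' y x)
    (hJac : ∀ x y z, μ' x (μ' y z) + μ' y (μ' z x) + μ' z (μ' x y) = 0)
    (hNonAb : ∃ x y, μ' x y ≠ 0) :
    Module.finrank ℂ ↥(⨅ y : Fin n → ℂ, LinearMap.ker (μ' y)) ≤ n - 2 ∧
    ¬ ∃ f : ℂ → (Fin n → ℂ) ≃ₗ[ℂ] (Fin n → ℂ),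
        ∀ x y : Fin n → ℂ,
          Tendsto (fun t : ℂ => (f t).symm (mu0 (f t x) (f t y)))
            (nhdsWithin 0 {0}ᶜ) (nhds (μ' x y)) := by
  obtain ⟨xna, yna, hna⟩ := hNonAb
  have hself : ∀ z : Fin n → ℂ, μ' z z = 0 := by
    intro z
    have h := hAnti z z
    funext i
    have h2 := congrFun h i
    simp only [Pi.neg_apply, Pi.zero_apply] at h2 ⊢
    linear_combination h2 / 2
  set Z := ⨅ y : Fin n → ℂ, LinearMap.ker (μ' y) with hZdef
  have hZmem : ∀ z ∈ Z, ∀ y, μ' y z = 0 := by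
    intro z hz y
    exact (Submodule.mem_iInf _).mp hz y
  have hdim : Module.finrank ℂ (Fin n → ℂ) = n := by simp
  constructor
  · -- Part 1: center has dimension ≤ n - 2
    by_contra hc
    push_neg at hc
    have hge : n - 1 ≤ Module.finrank ℂ ↥Z := by omega
    -- find u with Z ⊔ span{u} = ⊤
    have habelian : ∀ x y, μ' x y = 0 := by
      by_cases htop : Z = ⊤
      · intro x y
        exact hZmem y (htop ▸ Submodule.mem_top) x
      · have : ∃ u, u ∉ Z := by
          by_contra hu; push_neg at hu
          exact htop (Submodule.eq_top_iff'.mpr hu)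
        obtain ⟨u, hu⟩ := this
        have hlt : Z < Z ⊔ Submodule.span ℂ {u} := by
          refine lt_of_le_of_ne le_sup_left ?_
          intro he
          exact hu (he ▸ Submodule.mem_sup_right (Submodule.mem_span_singleton_self u))
        have h1 : Module.finrank ℂ ↥Z < Module.finrank ℂ ↥(Z ⊔ Submodule.span ℂ {u}) :=
          Submodule.finrank_lt_finrank_of_lt hlt
        have h2 : Module.finrank ℂ ↥(Z ⊔ Submodule.span ℂ {u}) ≤ n := by
          have := Submodule.finrank_le (Z ⊔ Submodule.span ℂ {u})
          rwa [hdim] at this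
        have hn1 : 1 ≤ n := Nat.one_le_iff_ne_zero.mpr (NeZero.ne n)
        have h3 : Module.finrank ℂ ↥(Z ⊔ Submodule.span ℂ {u}) = n := by omega
        have htop' : Z ⊔ Submodule.span ℂ {u} = ⊤ :=
          Submodule.eq_top_of_finrank_eq (h3.trans hdim.symm)
        intro x y
        have hx : x ∈ Z ⊔ Submodule.span ℂ {u} := htop' ▸ Submodule.mem_top
        have hy : y ∈ Z ⊔ Submodule.span ℂ {u} := htop' ▸ Submodule.mem_top
        obtain ⟨z1, hz1, s1, hs1, hxe⟩ := Submodule.mem_sup.mp hx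
        obtain ⟨z2, hz2, s2, hs2, hye⟩ := Submodule.mem_sup.mp hy
        obtain ⟨a, ha⟩ := Submodule.mem_span_singleton.mp hs1
        obtain ⟨b, hb⟩ := Submodule.mem_span_singleton.mp hs2
        rw [← hxe, ← hye, ← ha, ← hb]
        have hz1u : μ' z1 u = 0 := by
          rw [hAnti z1 u, hZmem z1 hz1 u]; simp
        simp [map_add, map_smul, hZmem z2 hz2, hz1u, hself]
    exact hna (habelian xna yna)
  · -- Part 2: no contraction
    rintro ⟨f, hf⟩
    set g : ℂ → (Fin n → ℂ) → (Fin n → ℂ) → (Fin n → ℂ) :=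
      fun t x y => (f t).symm (mu0 (f t x) (f t y)) with hgdef
    -- rank-one structure of mu0
    have hfac : ∀ (t : ℂ) (x y : Fin n → ℂ),
        g t x y = (f t y 0) • (f t).symm (fun j => if j = 0 then 0 else (f t x) (j - 1)) := by
      intro t x y
      have : mu0 (f t x) (f t y) =
          (f t y 0) • (fun j => if j = 0 then 0 else (f t x) (j - 1)) := by
        funext j
        simp only [mu0, Pi.smul_apply, smul_eq_mul]
        by_cases hj : j = 0 <;> simp [hj, mul_comm]
      rw [hgdef]
      simp only [this, map_smul]
    have hgkey : ∀ (t : ℂ) (x x' y y' : Fin n → ℂ) (i j : Fin n),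
        g t x y i * g t x' y' j = g t x y' i * g t x' y j := by
      intro t x x' y y' i j
      rw [hfac t x y, hfac t x' y', hfac t x y', hfac t x' y]
      simp only [Pi.smul_apply, smul_eq_mul]
      ring
    -- pass to the limit
    have hkey : ∀ (x x' y y' : Fin n → ℂ) (i j : Fin n),
        μ' x y i * μ' x' y' j = μ' x y' i * μ' x' y j := by
      intro x x' y y' i j
      have t1 : Tendsto (fun t => g t x y i * g t x' y' j) (nhdsWithin 0 {0}ᶜ)
          (nhds (μ' x y i * μ' x' y' j)) :=
        (tendsto_pi_nhds.mp (hf x y) i).mul (tendsto_pi_nhds.mp (hf x' y') j)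
      have t2 : Tendsto (fun t => g t x y' i * g t x' y j) (nhdsWithin 0 {0}ᶜ)
          (nhds (μ' x y' i * μ' x' y j)) :=
        (tendsto_pi_nhds.mp (hf x y') i).mul (tendsto_pi_nhds.mp (hf x' y) j)
      have he : (fun t => g t x y i * g t x' y' j)
          = (fun t => g t x y' i * g t x' y j) := funext fun t => hgkey t x x' y y' i j
      rw [he] at t1
      exact tendsto_nhds_unique t1 t2
    exact hna (abelian_of_rankone μ' hAnti hkey xna yna)
end
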